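/- arXiv:2603.25490 — 4 statements merged into one kernel-verified Lean document; each statement's English description precedes it below -/
import Mathlib

section
/- Exact penalty closes the duality gap for finite feasible sets: if S is a finite nonempty set with at least one point satisfying r = 0, and z* = min{c(x) : (x,p) ∈ S, r(x,p) = 0}, then for any λ ∈ ℝⁿ there exists a finite ρ(λ) ≥ 0 such that for all ρ ≥ ρ(λ), inf_{(x,p)∈S} [c(x) + ⟨λ, r(x,p)⟩ + ρ‖r(x,p)‖₁] = z*. -/
open Finset

/-! On the finitely many infeasible points the penalty `‖r‖₁` is bounded away from zero, so a
large enough `ρ` lifts every one of them above `z*`; feasible points contribute `c ≥ z*`, and a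
feasible minimiser attains `z*`. -/

theorem Set.Finite.exists_exact_penalty {α : Type*} {S : Set α} (hS : S.Finite)
    (f p : α → ℝ) (z : ℝ) (hp : ∀ s ∈ S, 0 ≤ p s) (hzero : ∀ s ∈ S, p s = 0 → z ≤ f s) :
    ∃ ρ₀ : ℝ, 0 ≤ ρ₀ ∧ ∀ ρ : ℝ, ρ₀ ≤ ρ → ∀ s ∈ S, z ≤ f s + ρ * p s := by
  obtain ⟨M, hM⟩ := (hS.image fun s => (z - f s) / p s).bddAbove
  refine ⟨max 0 M, le_max_left _ _, fun ρ hρ s hs => ?_⟩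
  rcases (hp s hs).eq_or_lt with hps | hps
  · simpa [← hps] using hzero s hs hps.symm
  · have hdiv : (z - f s) / p s ≤ ρ :=
      (hM (Set.mem_image_of_mem _ hs)).trans ((le_max_right _ _).trans hρ)
    linarith [(div_le_iff₀ hps).1 hdiv]

theorem sum_abs_eq_zero_iff {ι : Type*} [Fintype ι] (v : ι → ℝ) :
    ∑ i, |v i| = 0 ↔ v = 0 := by
  simp [Finset.sum_eq_zero_iff_of_nonneg (fun i _ => abs_nonneg (v i)), funext_iff]

theorem ald_exact_penalty_finite_general {X P : Type*} {n : ℕ} (S : Set (X × P))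
    (hFin : S.Finite)
    (c : X → ℝ) (r : X × P → Fin n → ℝ)
    (zstar : ℝ)
    (hzstar : IsLeast {v : ℝ | ∃ s ∈ S, r s = 0 ∧ v = c s.1} zstar) :
    ∀ lam : Fin n → ℝ, ∃ ρ₀ : ℝ, 0 ≤ ρ₀ ∧ ∀ ρ : ℝ, ρ₀ ≤ ρ →
      sInf {v : ℝ | ∃ s ∈ S,
        v = c s.1 + (∑ i, lam i * r s i) + ρ * ∑ i, |r s i|} = zstar := by
  intro lam
  have hfeasible : ∀ s ∈ S, ∑ i, |r s i| = 0 → zstar ≤ c s.1 + ∑ i, lam i * r s i := by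
    intro s hs hzero
    rw [sum_abs_eq_zero_iff] at hzero
    simpa [hzero] using hzstar.2 ⟨s, hs, hzero, rfl⟩
  obtain ⟨ρ₀, hρ₀, hpenalty⟩ := hFin.exists_exact_penalty _ _ zstar
    (fun s _ => Finset.sum_nonneg fun i _ => abs_nonneg (r s i)) hfeasible
  refine ⟨ρ₀, hρ₀, fun ρ hρ => IsLeast.csInf_eq ⟨?_, ?_⟩⟩
  · obtain ⟨s, hs, hr, rfl⟩ := hzstar.1
    exact ⟨s, hs, by simp [hr]⟩
  · rintro v ⟨s, hs, rfl⟩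
    exact hpenalty ρ hρ s hs

/-- Exact penalty closes the duality gap for finite feasible sets: if `S` is finite and
nonempty with at least one point satisfying `r = 0`, and `z*` is the minimal feasible cost,
then for any `λ` there exists a finite `ρ(λ) ≥ 0` such that for all `ρ ≥ ρ(λ)` the
augmented Lagrangian dual value equals `z*`. -/
theorem ald_exact_penalty_finite {X P : Type*} {n : ℕ} (S : Set (X × P))
    (hFin : S.Finite) (hS : S.Nonempty)
    (c : X → ℝ) (r : X × P → Fin n → ℝ)
    (hfeas : ∃ s ∈ S, r s = 0)
    (zstar : ℝ)
    (hzstar : IsLeast {v : ℝ | ∃ s ∈ S, r s = 0 ∧ v = c s.1} zstar) :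
    ∀ lam : Fin n → ℝ, ∃ ρ₀ : ℝ, 0 ≤ ρ₀ ∧ ∀ ρ : ℝ, ρ₀ ≤ ρ →
      sInf {v : ℝ | ∃ s ∈ S,
        v = c s.1 + (∑ i, lam i * r s i) + ρ * ∑ i, |r s i|} = zstar :=
  ald_exact_penalty_finite_general S hFin c r zstar hzstar
end

section
/- If the duality gap is closed at (λ*, ρ), i.e. inf_{(x,p)∈S} L_ρ(x,p,λ*) = z* where z* is the primal optimal value attained at a feasible point (x*,p*), then any minimizer (x̂,p̂) of L_ρ(·,·,λ*) with strictly larger penalty ρ' > ρ must be primal feasible (r(x̂,p̂) = 0) and primal optimal (c(x̂) = z*). -/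
open Finset

/- A minimizer of `L_{ρ'}` is squeezed: `z* ≤ L_ρ(x̂)` by strong duality and
`L_{ρ'}(x̂) ≤ L_{ρ'}(x*) = z*` by minimality, since `x*` is feasible. As `ρ < ρ'`, the
penalty `‖r(x̂)‖₁` must vanish, and then both bounds read `c(x̂) = z*`. -/

theorem eq_zero_and_eq_of_le_add_mul_of_add_mul_le {f g z ρ ρ' : ℝ} (hg : 0 ≤ g)
    (hρ : ρ < ρ') (hlow : z ≤ f + ρ * g) (hup : f + ρ' * g ≤ z) : g = 0 ∧ f = z := by
  have hg0 : g = 0 := by nlinarith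
  subst hg0
  constructor <;> linarith

theorem ald_minimizer_at_larger_penalty_is_optimal_general {X P : Type*} {n : ℕ}
    (S : Set (X × P)) (c : X → ℝ) (r : X × P → Fin n → ℝ)
    (xpstar : X × P) (hmem : xpstar ∈ S) (hfeas : r xpstar = 0)
    (zstar : ℝ) (hzstar : zstar = c xpstar.1)
    (lamstar : Fin n → ℝ) (ρ ρ' : ℝ) (hρ' : ρ < ρ')
    (hSD : IsGLB {v : ℝ | ∃ s ∈ S,
      v = c s.1 + (∑ i, lamstar i * r s i) + ρ * ∑ i, |r s i|} zstar)
    (xphat : X × P) (hhat : xphat ∈ S)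
    (hmin : ∀ s ∈ S,
      c xphat.1 + (∑ i, lamstar i * r xphat i) + ρ' * ∑ i, |r xphat i|
        ≤ c s.1 + (∑ i, lamstar i * r s i) + ρ' * ∑ i, |r s i|) :
    r xphat = 0 ∧ c xphat.1 = zstar := by
  have hlow := hSD.1 ⟨xphat, hhat, rfl⟩
  have hup : c xphat.1 + (∑ i, lamstar i * r xphat i) + ρ' * ∑ i, |r xphat i| ≤ zstar := by
    simpa [hfeas, hzstar] using hmin xpstar hmem
  obtain ⟨hpenalty, hvalue⟩ :=
    eq_zero_and_eq_of_le_add_mul_of_add_mul_le (by positivity) hρ' hlow hup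
  have hr : r xphat = 0 := (sum_abs_eq_zero_iff _).1 hpenalty
  exact ⟨hr, by simpa [hr] using hvalue⟩

/-- If the duality gap is closed at `(λ*, ρ)`, i.e. `inf_{S} L_ρ(·,·,λ*) = z*` with `z*`
the primal optimal value attained at a feasible `(x*,p*)`, then any minimizer of
`L_{ρ'}(·,·,λ*)` over `S` with `ρ' > ρ` is primal feasible and primal optimal. -/
theorem ald_minimizer_at_larger_penalty_is_optimal {X P : Type*} {n : ℕ}
    (S : Set (X × P)) (c : X → ℝ) (r : X × P → Fin n → ℝ)
    (xpstar : X × P) (hmem : xpstar ∈ S) (hfeas : r xpstar = 0)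
    (hopt : ∀ s ∈ S, r s = 0 → c xpstar.1 ≤ c s.1)
    (zstar : ℝ) (hzstar : zstar = c xpstar.1)
    (lamstar : Fin n → ℝ) (ρ ρ' : ℝ) (hρ : 0 ≤ ρ) (hρ' : ρ < ρ')
    (hSD : IsGLB {v : ℝ | ∃ s ∈ S,
      v = c s.1 + (∑ i, lamstar i * r s i) + ρ * ∑ i, |r s i|} zstar)
    (xphat : X × P) (hhat : xphat ∈ S)
    (hmin : ∀ s ∈ S,
      c xphat.1 + (∑ i, lamstar i * r xphat i) + ρ' * ∑ i, |r xphat i|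
        ≤ c s.1 + (∑ i, lamstar i * r s i) + ρ' * ∑ i, |r s i|) :
    r xphat = 0 ∧ c xphat.1 = zstar :=
  ald_minimizer_at_larger_penalty_is_optimal_general S c r xpstar hmem hfeas zstar hzstar lamstar ρ
    ρ' hρ' hSD xphat hhat hmin
end

section
/- Incentive compatibility of ALD pricing: suppose strong duality holds, i.e. min over x ∈ ∏ᵢ Xᵢ, p ∈ P of L_ρ(x,p,λ*) = ∑ᵢ cᵢ(xᵢ*) where (x*,p*) is primal optimal with zero residuals, and suppose P contains p* and satisfies ∑ₐ pₐ = 0 for all p ∈ P with the balance term correction Ψ(p*) = 0. Then for each order i, the reference dispatch xᵢ* minimizes the individual objective fᵢ(xᵢ) = cᵢ(xᵢ) − ∑ₐ λₐ* qₐᵢ xᵢ + ρ ∑ₐ |qₐᵢ(xᵢ − xᵢ*)| − ρ ∑ₐ qₐᵢ xᵢ* over Xᵢ. -/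
/-!
Let order `i` deviate alone to `y ∈ Xᵢ` while every other order keeps `x*` and the injections
stay at `p*`. Because `p*` balances `x*`, the residuals of this point are exactly
`-qₐᵢ (y - xᵢ*)`, so strong duality bounds its augmented Lagrangian from below by `∑ⱼ cⱼ xⱼ*`;
cancelling the contributions of the other orders leaves `fᵢ(xᵢ*) ≤ fᵢ(y)`.
-/

open Finset

theorem Fintype.sum_mul_update {ι R : Type*} [Fintype ι] [DecidableEq ι] [CommRing R]
    (w x : ι → R) (i : ι) (y : R) :
    ∑ j, w j * Function.update x i y j = ∑ j, w j * x j + w i * (y - x i) := by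
  have hoff : ∀ j ∈ univ \ {i}, w j * Function.update x i y j = w j * x j := fun j hj => by
    rw [Function.update_of_ne (by simpa using hj)]
  rw [sum_eq_add_sum_sdiff_singleton_of_mem (mem_univ i), Function.update_self,
    Finset.sum_congr rfl hoff, sum_eq_add_sum_sdiff_singleton_of_mem (mem_univ i)]
  ring

section AugmentedLagrangian

variable {A I : Type*} [Fintype A] [Fintype I]

/-- `L_ρ(x, p, λ)` with linear costs `cᵢ xᵢ`. -/
def augLagrangian (c : I → ℝ) (q : A → I → ℝ) (lam : A → ℝ) (ρ : ℝ) (x : I → ℝ)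
    (p : A → ℝ) : ℝ :=
  (∑ i, c i * x i) + (∑ a, lam a * (p a - ∑ i, q a i * x i))
    + ρ * ∑ a, |p a - ∑ i, q a i * x i|

theorem augLagrangian_update_of_feasible [DecidableEq I] (c : I → ℝ) (q : A → I → ℝ)
    (lam : A → ℝ) (ρ : ℝ) {x : I → ℝ} {p : A → ℝ} (hfeas : ∀ a, p a = ∑ j, q a j * x j)
    (i : I) (y : ℝ) :
    augLagrangian c q lam ρ (Function.update x i y) p
      = ∑ j, c j * x j + c i * (y - x i) - ∑ a, lam a * (q a i * (y - x i))
        + ρ * ∑ a, |q a i * (y - x i)| := by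
  have hres : ∀ a, p a - ∑ j, q a j * Function.update x i y j = -(q a i * (y - x i)) := by
    intro a
    rw [Fintype.sum_mul_update, ← hfeas, sub_add_cancel_left]
  simp only [augLagrangian, hres, mul_neg, sum_neg_distrib, abs_neg]
  rw [Fintype.sum_mul_update]
  ring

end AugmentedLagrangian

theorem ald_incentive_compatibility_general {A I : Type*} [Fintype A] [Fintype I]
    (Xi : I → Set ℝ) (P : Set (A → ℝ)) (q : A → I → ℝ) (c : I → ℝ)
    (lam : A → ℝ) (ρ : ℝ)
    (xstar : I → ℝ) (pstar : A → ℝ)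
    (hx : ∀ i, xstar i ∈ Xi i) (hp : pstar ∈ P)
    (hfeas : ∀ a, pstar a = ∑ i, q a i * xstar i)
    (hSD : IsLeast {v : ℝ | ∃ (x : I → ℝ) (p : A → ℝ),
        (∀ i, x i ∈ Xi i) ∧ p ∈ P ∧
        v = (∑ i, c i * x i) + (∑ a, lam a * (p a - ∑ i, q a i * x i))
          + ρ * ∑ a, |p a - ∑ i, q a i * x i|}
      (∑ i, c i * xstar i)) :
    ∀ i, ∀ y ∈ Xi i,
      (c i * xstar i - (∑ a, lam a * (q a i * xstar i))
          + ρ * (∑ a, |q a i * (xstar i - xstar i)|) - ρ * ∑ a, q a i * xstar i)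
        ≤ (c i * y - (∑ a, lam a * (q a i * y))
          + ρ * (∑ a, |q a i * (y - xstar i)|) - ρ * ∑ a, q a i * xstar i) := by
  classical
  intro i y hy
  have hdev : ∑ j, c j * xstar j ≤ augLagrangian c q lam ρ (Function.update xstar i y) pstar :=
    hSD.2 ⟨_, pstar,
      (Function.forall_update_iff xstar fun j z => z ∈ Xi j).2 ⟨hy, fun j _ => hx j⟩, hp, rfl⟩
  rw [augLagrangian_update_of_feasible c q lam ρ hfeas] at hdev
  have hprice : ∑ a, lam a * (q a i * (y - xstar i))
      = ∑ a, lam a * (q a i * y) - ∑ a, lam a * (q a i * xstar i) := by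
    simp only [mul_sub, sum_sub_distrib]
  simp only [sub_self, mul_zero, abs_zero, sum_const_zero]
  linarith

/-- Incentive compatibility of ALD pricing: under strong duality of the augmented
Lagrangian at `(λ*, ρ)` (the minimum of `L_ρ(·,·,λ*)` over the decomposed feasible sets
equals the primal optimal value `∑ᵢ cᵢ xᵢ*`), market balance `∑ₐ pₐ = 0` on `P`, and
nonnegativity of the net-injection correction term `Ψ`, every order's reference dispatch
`xᵢ*` minimizes its individual deviation-penalized objective over `Xᵢ`. -/
theorem ald_incentive_compatibility {A I : Type*} [Fintype A] [Fintype I]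
    (Xi : I → Set ℝ) (P : Set (A → ℝ)) (q : A → I → ℝ) (c : I → ℝ)
    (lam : A → ℝ) (ρ : ℝ) (hρ : 0 ≤ ρ)
    (xstar : I → ℝ) (pstar : A → ℝ)
    (hx : ∀ i, xstar i ∈ Xi i) (hp : pstar ∈ P)
    (hfeas : ∀ a, pstar a = ∑ i, q a i * xstar i)
    (hbal : ∀ p ∈ P, ∑ a, p a = 0)
    (hPsi : ∀ p ∈ P,
      0 ≤ (∑ a, lam a * (p a - pstar a)) + ρ * ∑ a, |p a - pstar a|)
    (hSD : IsLeast {v : ℝ | ∃ (x : I → ℝ) (p : A → ℝ),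
        (∀ i, x i ∈ Xi i) ∧ p ∈ P ∧
        v = (∑ i, c i * x i) + (∑ a, lam a * (p a - ∑ i, q a i * x i))
          + ρ * ∑ a, |p a - ∑ i, q a i * x i|}
      (∑ i, c i * xstar i)) :
    ∀ i, ∀ y ∈ Xi i,
      (c i * xstar i - (∑ a, lam a * (q a i * xstar i))
          + ρ * (∑ a, |q a i * (xstar i - xstar i)|) - ρ * ∑ a, q a i * xstar i)
        ≤ (c i * y - (∑ a, lam a * (q a i * y))
          + ρ * (∑ a, |q a i * (y - xstar i)|) - ρ * ∑ a, q a i * xstar i) :=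
  ald_incentive_compatibility_general Xi P q c lam ρ xstar pstar hx hp hfeas hSD
end

section
/- PAO remedy via transfer payment: for a demand order i (q < 0) with individual objective f(x) = c x − λ q x + ρ|q(x − x*)| − ρ q x*, adding the transfer payment Ω = −2ρ q x* replaces the last term by −ρ|q x*| (assuming x* ≥ 0), and the remedied objective g(x) = c x − λ q x + ρ|q(x − x*)| − ρ|q x*| satisfies g(0) = 0; consequently, if x* minimizes g over a feasible set containing 0, the remedied surplus −g(x*) is non-negative. -/
def remediedObjective (q c lam ρ xstar x : ℝ) : ℝ :=
  c * x - lam * q * x + ρ * |q * (x - xstar)| - ρ * |q * xstar|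

theorem remediedObjective_zero (q c lam ρ xstar : ℝ) :
    remediedObjective q c lam ρ xstar 0 = 0 := by
  rw [remediedObjective, zero_sub, mul_neg, abs_neg]
  ring

theorem IsMinOn.le_zero_of_map_zero {α β : Type*} [Zero α] [Preorder β] [Zero β]
    {f : α → β} {s : Set α} {a : α} (hmin : IsMinOn f s a) (h0 : (0 : α) ∈ s)
    (hf0 : f 0 = 0) : f a ≤ 0 :=
  hf0 ▸ hmin h0

theorem ald_pao_remedy_general (q c lam ρ xstar : ℝ) (Xi : Set ℝ)
    (h0 : (0 : ℝ) ∈ Xi)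
    (hmin : ∀ x ∈ Xi,
      c * xstar - lam * q * xstar + ρ * |q * (xstar - xstar)| - ρ * |q * xstar|
        ≤ c * x - lam * q * x + ρ * |q * (x - xstar)| - ρ * |q * xstar|) :
    (c * 0 - lam * q * 0 + ρ * |q * (0 - xstar)| - ρ * |q * xstar| = 0) ∧
      0 ≤ -(c * xstar - lam * q * xstar + ρ * |q * (xstar - xstar)|
            - ρ * |q * xstar|) := by
  have hg0 := remediedObjective_zero q c lam ρ xstar
  have hmin' : IsMinOn (remediedObjective q c lam ρ xstar) Xi xstar := isMinOn_iff.mpr hmin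
  exact ⟨hg0, neg_nonneg.mpr (hmin'.le_zero_of_map_zero h0 hg0)⟩

/-- PAO remedy via transfer payment: for a demand order (`q < 0`) the remedied objective
`g(x) = cx − λqx + ρ|q(x − x*)| − ρ|qx*|` satisfies `g(0) = 0`; consequently, if `x*`
minimizes `g` over a feasible set containing `0`, the remedied surplus `−g(x*)` is
non-negative. -/
theorem ald_pao_remedy (q c lam ρ xstar : ℝ) (Xi : Set ℝ)
    (hq : q < 0) (hρ : 0 ≤ ρ) (hxnn : 0 ≤ xstar)
    (h0 : (0 : ℝ) ∈ Xi) (hxstar : xstar ∈ Xi)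
    (hmin : ∀ x ∈ Xi,
      c * xstar - lam * q * xstar + ρ * |q * (xstar - xstar)| - ρ * |q * xstar|
        ≤ c * x - lam * q * x + ρ * |q * (x - xstar)| - ρ * |q * xstar|) :
    (c * 0 - lam * q * 0 + ρ * |q * (0 - xstar)| - ρ * |q * xstar| = 0) ∧
      0 ≤ -(c * xstar - lam * q * xstar + ρ * |q * (xstar - xstar)|
            - ρ * |q * xstar|) :=
  ald_pao_remedy_general q c lam ρ xstar Xi h0 hmin
end
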